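/- Suppose φ satisfies the Kolmogorov forward equation (KFE) on Ω for all t > 0. Then for all 0 < K < B with B > S₀ and all T > 0: ∂²C/∂T∂B (K,B,T) = − r(T) ∂C/∂B (K,B,T) + μ(T) D(T) [ − B (B−K) φ(B,B,T) + ∫_K^B (x−K) φ(x,B,T) dx + K ∫_K^B φ(x,B,T) dx ] + ½ D(T) [ σ²(K,B,T) K² φ(K,B,T) − σ²(B,B,T) B² φ(B,B,T) ] + ½ D(T) (B−K) [ ∂/∂x ( σ²(x,B,T) x² φ(x,B,T) ) ]_{x=B}. -/

import Mathlib

open MeasureTheory Real Filter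

/-- Discount factor `D(T) = exp(-∫₀ᵀ r(u) du)`. -/
noncomputable def disc (r : ℝ → ℝ) (T : ℝ) : ℝ := Real.exp (-(∫ u in (0:ℝ)..T, r u))

/-- Up-and-out call price
`C(K,B,T) = D(T) ∫_{max(K,S₀)}^B ∫_K^y (x-K) φ(x,y,T) dx dy`. -/
noncomputable def upOutCall (S₀ : ℝ) (r : ℝ → ℝ) (φ : ℝ → ℝ → ℝ → ℝ) (K B T : ℝ) : ℝ :=
  disc r T * ∫ y in (max K S₀)..B, ∫ x in K..y, (x - K) * φ x y T

/-!
Differentiating `C` in the barrier removes the outer integral, leaving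
`D(T) ∫_K^B (x - K) φ(x,B,T) dx`. Its time derivative is computed under the integral sign
(the time derivative of `φ` is continuous, hence bounded on compacts), and the forward equation
replaces `∂φ/∂t` by spatial derivatives; integrating `(x - K) ∂ₓ(x φ)` and
`(x - K) ∂ₓ²(σ² x² φ)` by parts gives the boundary terms of the identity.
-/

theorem hasDerivAt_disc {r : ℝ → ℝ} (hr : Continuous r) (T : ℝ) :
    HasDerivAt (disc r) (-r T * disc r T) T := by
  have hint : HasDerivAt (fun s => ∫ u in (0:ℝ)..s, r u) (r T) T :=
    intervalIntegral.integral_hasDerivAt_right (hr.intervalIntegrable _ _)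
      (hr.stronglyMeasurableAtFilter _ _) hr.continuousAt
  rw [mul_comm]
  exact hint.neg.exp

theorem hasDerivAt_upOutCall_barrier (S₀ : ℝ) (r : ℝ → ℝ) {φ : ℝ → ℝ → ℝ → ℝ} (K T B : ℝ)
    (hφ : Continuous fun p : ℝ × ℝ => φ p.1 p.2 T) :
    HasDerivAt (fun b => upOutCall S₀ r φ K b T)
      (disc r T * ∫ x in K..B, (x - K) * φ x B T) B := by
  have hinner : Continuous fun y => ∫ x in K..y, (x - K) * φ x y T :=
    intervalIntegral.continuous_parametric_intervalIntegral_of_continuous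
      (f := fun y x => (x - K) * φ x y T)
      ((continuous_snd.sub continuous_const).mul (hφ.comp continuous_swap)) continuous_id
  exact (intervalIntegral.integral_hasDerivAt_right (hinner.intervalIntegrable _ _)
    (hinner.stronglyMeasurableAtFilter _ _) hinner.continuousAt).const_mul (disc r T)

theorem hasDerivAt_intervalIntegral_of_continuous_deriv
    {E : Type*} [NormedAddCommGroup E] [NormedSpace ℝ E] {F F' : ℝ → ℝ → E} {a b t₀ : ℝ}
    (hF : ∀ t, Continuous (F t)) (hF' : Continuous (Function.uncurry F'))
    (hderiv : ∀ t x, HasDerivAt (fun t => F t x) (F' t x) t) :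
    HasDerivAt (fun t => ∫ x in a..b, F t x) (∫ x in a..b, F' t₀ x) t₀ := by
  obtain ⟨C, hC⟩ := ((isCompact_closedBall t₀ 1).prod isCompact_uIcc).exists_bound_of_continuousOn
    (f := Function.uncurry F') (s := Metric.closedBall t₀ 1 ×ˢ Set.uIcc a b) hF'.continuousOn
  refine (intervalIntegral.hasDerivAt_integral_of_dominated_loc_of_deriv_le (bound := fun _ => C)
    (Metric.closedBall_mem_nhds t₀ one_pos) (.of_forall fun t => (hF t).aestronglyMeasurable)
    ((hF t₀).intervalIntegrable _ _)
    (hF'.comp (Continuous.prodMk_right t₀)).aestronglyMeasurable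
    (.of_forall fun x hx t ht => hC (t, x) ⟨ht, Set.uIoc_subset_uIcc hx⟩)
    intervalIntegrable_const (.of_forall fun x _ t _ => hderiv t x)).2

theorem exists_hasDerivAt_third_of_contDiff {φ : ℝ → ℝ → ℝ → ℝ}
    (hφ : ContDiff ℝ 1 fun p : ℝ × ℝ × ℝ => φ p.1 p.2.1 p.2.2) :
    ∃ φt : ℝ → ℝ → ℝ → ℝ, Continuous (fun p : ℝ × ℝ × ℝ => φt p.1 p.2.1 p.2.2) ∧
      ∀ x y t, HasDerivAt (fun t' => φ x y t') (φt x y t) t := by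
  refine ⟨fun x y t => fderiv ℝ (fun p : ℝ × ℝ × ℝ => φ p.1 p.2.1 p.2.2) (x, y, t) (0, 0, 1),
    (hφ.continuous_fderiv one_ne_zero).clm_apply continuous_const, fun x y t => ?_⟩
  have hline : HasDerivAt (fun t' : ℝ => (x, y, t')) ((0, 0, 1) : ℝ × ℝ × ℝ) t :=
    (hasDerivAt_const t x).prodMk ((hasDerivAt_const t y).prodMk (hasDerivAt_id t))
  exact ((hφ.differentiable one_ne_zero) (x, y, t)).hasFDerivAt.comp_hasDerivAt t hline

theorem integral_sub_mul_deriv {u : ℝ → ℝ} (hu : ContDiff ℝ 1 u) (a b : ℝ) :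
    ∫ x in a..b, (x - a) * deriv u x = (b - a) * u b - ∫ x in a..b, u x := by
  have hparts := intervalIntegral.integral_mul_deriv_eq_deriv_mul (a := a) (b := b)
    (u := fun x => x - a) (u' := fun _ => 1)
    (fun x _ => (hasDerivAt_id x).sub_const a)
    (fun x _ => (hu.differentiable one_ne_zero x).hasDerivAt)
    intervalIntegrable_const ((hu.continuous_deriv le_rfl).intervalIntegrable _ _)
  simpa using hparts

theorem integral_sub_mul_deriv_deriv {g : ℝ → ℝ} (hg : ContDiff ℝ 2 g) (a b : ℝ) :
    ∫ x in a..b, (x - a) * deriv (deriv g) x = (b - a) * deriv g b - (g b - g a) := by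
  have hg' : ContDiff ℝ 1 (deriv g) := hg.iterate_deriv' 1 1
  rw [integral_sub_mul_deriv hg', intervalIntegral.integral_deriv_eq_sub
    (fun x _ => hg.differentiable two_ne_zero x) (hg'.continuous.intervalIntegrable _ _)]

theorem integral_sub_mul_of_forward_eq {f A g : ℝ → ℝ} {μ a b : ℝ} (hab : a ≤ b)
    (hA : ContDiff ℝ 1 A) (hg : ContDiff ℝ 2 g)
    (hfwd : ∀ x ∈ Set.Ioo a b, f x + μ * deriv A x - (1/2) * deriv (deriv g) x = 0) :
    ∫ x in a..b, (x - a) * f x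
      = (1/2) * ((b - a) * deriv g b - (g b - g a))
        - μ * ((b - a) * A b - ∫ x in a..b, A x) := by
  have hA' : Continuous fun x => (x - a) * deriv A x := by
    have := hA.continuous_deriv le_rfl
    fun_prop
  have hg'' : Continuous fun x => (x - a) * deriv (deriv g) x := by
    have := (hg.iterate_deriv' 1 1).continuous_deriv le_rfl
    fun_prop
  have hsubst : ∫ x in a..b, (x - a) * f x
      = ∫ x in a..b, ((1/2) * ((x - a) * deriv (deriv g) x) - μ * ((x - a) * deriv A x)) := by
    simp only [intervalIntegral.integral_of_le hab, integral_Ioc_eq_integral_Ioo]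
    exact setIntegral_congr_fun measurableSet_Ioo fun x hx => by
      linear_combination (x - a) * hfwd x hx
  rw [hsubst, intervalIntegral.integral_sub ((hg''.intervalIntegrable _ _).const_mul _)
      ((hA'.intervalIntegrable _ _).const_mul _), intervalIntegral.integral_const_mul,
    intervalIntegral.integral_const_mul, integral_sub_mul_deriv_deriv hg, integral_sub_mul_deriv hA]

theorem stmt_5_general (S₀ : ℝ)
    (r q : ℝ → ℝ) (hr : Continuous r)
    (σ φ : ℝ → ℝ → ℝ → ℝ)
    (hσx : ∀ y t, ContDiff ℝ 2 fun x => σ x y t)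
    (hφ : ContDiff ℝ 2 fun p : ℝ × ℝ × ℝ => φ p.1 p.2.1 p.2.2)
    -- Kolmogorov forward equation on Ω, t > 0
    (hKFE : ∀ x y t : ℝ, 0 < x → x < y → S₀ < y → 0 < t →
      deriv (fun t' => φ x y t') t
        + (r t - q t) * deriv (fun x' => x' * φ x' y t) x
        - (1/2) * deriv (deriv (fun x' => (σ x' y t)^2 * x'^2 * φ x' y t)) x = 0) :
    ∀ K B T : ℝ, 0 < K → K < B → S₀ < B → 0 < T →
      deriv (fun T' => deriv (fun B' => upOutCall S₀ r φ K B' T') B) T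
      = - r T * deriv (fun B' => upOutCall S₀ r φ K B' T) B
        + (r T - q T) * disc r T *
            (- B * (B - K) * φ B B T
              + (∫ x in K..B, (x - K) * φ x B T)
              + K * ∫ x in K..B, φ x B T)
        + (1/2) * disc r T *
            ((σ K B T)^2 * K^2 * φ K B T - (σ B B T)^2 * B^2 * φ B B T)
        + (1/2) * disc r T * (B - K)
            * deriv (fun x => (σ x B T)^2 * x^2 * φ x B T) B := by
  intro K B T hK hKB hSB hT
  obtain ⟨φt, hφt_cont, hφt⟩ := exists_hasDerivAt_third_of_contDiff (hφ.of_le one_le_two)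
  have hφx : ∀ y t, ContDiff ℝ 2 fun x => φ x y t := fun y t =>
    hφ.comp (contDiff_id.prodMk (contDiff_const (c := (y, t))))
  have hbarrier : ∀ t, HasDerivAt (fun b => upOutCall S₀ r φ K b t)
      (disc r t * ∫ x in K..B, (x - K) * φ x B t) B := fun t =>
    hasDerivAt_upOutCall_barrier S₀ r K t B
      (hφ.continuous.comp (continuous_fst.prodMk (continuous_snd.prodMk continuous_const)))
  have htime : HasDerivAt (fun t => ∫ x in K..B, (x - K) * φ x B t)
      (∫ x in K..B, (x - K) * φt x B T) T :=
    hasDerivAt_intervalIntegral_of_continuous_deriv (F' := fun t x => (x - K) * φt x B t)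
      (fun t => (continuous_id.sub continuous_const).mul (hφx B t).continuous)
      ((continuous_snd.sub continuous_const).mul
        (hφt_cont.comp (continuous_snd.prodMk (continuous_const.prodMk continuous_fst))))
      (fun t x => (hφt x B t).const_mul (x - K))
  have hforward := integral_sub_mul_of_forward_eq (f := fun x => φt x B T)
    (A := fun x => x * φ x B T) (g := fun x => σ x B T ^ 2 * x ^ 2 * φ x B T)
    hKB.le ((contDiff_id.mul (hφx B T)).of_le one_le_two)
    (((hσx B T).pow 2).mul (contDiff_id.pow 2) |>.mul (hφx B T)) fun x hx => by
      rw [← (hφt x B T).deriv]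
      exact hKFE x B T (hK.trans hx.1) hx.2 hSB hT
  have hsplit : ∫ x in K..B, x * φ x B T
      = (∫ x in K..B, (x - K) * φ x B T) + K * ∫ x in K..B, φ x B T := by
    have := (hφx B T).continuous
    rw [← intervalIntegral.integral_const_mul, ← intervalIntegral.integral_add
      (Continuous.intervalIntegrable (by fun_prop) _ _)
      (Continuous.intervalIntegrable (by fun_prop) _ _)]
    exact intervalIntegral.integral_congr fun x _ => by ring
  rw [funext fun t => (hbarrier t).deriv, ((hasDerivAt_disc hr T).fun_mul htime).deriv,
    (hbarrier T).deriv, hforward, hsplit]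
  ring

/-- Intermediate identity in the proof of the forward equation: if `φ` satisfies the
Kolmogorov forward equation on `Ω` for all `t > 0`, then for all `0 < K < B`, `B > S₀`,
`T > 0`,
`∂²C/∂T∂B = - r(T) ∂C/∂B
  + μ(T) D(T) [ -B(B-K)φ(B,B,T) + ∫_K^B (x-K)φ dx + K ∫_K^B φ dx ]
  + ½ D(T) [σ²(K,B,T)K²φ(K,B,T) - σ²(B,B,T)B²φ(B,B,T)]
  + ½ D(T)(B-K) [∂/∂x(σ²(x,B,T)x²φ(x,B,T))]_{x=B}`. -/
theorem stmt_5 (S₀ : ℝ) (hS₀ : 0 < S₀)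
    (r q : ℝ → ℝ) (hr : Continuous r) (hq : Continuous q)
    (σ φ : ℝ → ℝ → ℝ → ℝ)
    (hσbd : ∃ M : ℝ, ∀ x y t, |σ x y t| ≤ M)
    (hσx : ∀ y t, ContDiff ℝ 2 fun x => σ x y t)
    (hσy : ∀ x t, ContDiff ℝ 1 fun y => σ x y t)
    (hσt : ∀ x y, Continuous fun t => σ x y t)
    (hφ : ContDiff ℝ 2 fun p : ℝ × ℝ × ℝ => φ p.1 p.2.1 p.2.2)
    (hφbd : ∃ M : ℝ, ∀ p : ℝ × ℝ × ℝ,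
      ‖fderiv ℝ (fun p : ℝ × ℝ × ℝ => φ p.1 p.2.1 p.2.2) p‖ ≤ M)
    -- Kolmogorov forward equation on Ω, t > 0
    (hKFE : ∀ x y t : ℝ, 0 < x → x < y → S₀ < y → 0 < t →
      deriv (fun t' => φ x y t') t
        + (r t - q t) * deriv (fun x' => x' * φ x' y t) x
        - (1/2) * deriv (deriv (fun x' => (σ x' y t)^2 * x'^2 * φ x' y t)) x = 0) :
    ∀ K B T : ℝ, 0 < K → K < B → S₀ < B → 0 < T →
      deriv (fun T' => deriv (fun B' => upOutCall S₀ r φ K B' T') B) T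
      = - r T * deriv (fun B' => upOutCall S₀ r φ K B' T) B
        + (r T - q T) * disc r T *
            (- B * (B - K) * φ B B T
              + (∫ x in K..B, (x - K) * φ x B T)
              + K * ∫ x in K..B, φ x B T)
        + (1/2) * disc r T *
            ((σ K B T)^2 * K^2 * φ K B T - (σ B B T)^2 * B^2 * φ B B T)
        + (1/2) * disc r T * (B - K)
            * deriv (fun x => (σ x B T)^2 * x^2 * φ x B T) B :=
  stmt_5_general S₀ r q hr σ φ hσx hφ hKFE
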